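/- arXiv:math/0002004 — 6 statements merged into one kernel-verified Lean document; each statement's English description precedes it below -/
import Mathlib

section
/- For any non-equilateral triangle, OI > 2·IN; that is, the incenter lies strictly inside the circle of Apollonius {P : OP = 2·PN}, which is the orthocentroidal circle (the circle with diameter GH). -/
/-- For a non-equilateral triangle (`R > 2r`, `r > 0`), the incenter lies
strictly inside the orthocentroidal circle: `OI > 2·IN`. -/
theorem stmt2 (O I N : EuclideanSpace ℝ (Fin 2)) (R r : ℝ)
    (hr : 0 < r) (hRr : 2 * r < R)
    (hEuler : dist O I ^ 2 = R * (R - 2 * r))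
    (hFeuerbach : dist I N = R / 2 - r) :
    dist O I > 2 * dist I N := by
  have h0 : (0:ℝ) ≤ dist O I := dist_nonneg
  nlinarith [sq_nonneg (dist O I - (R - 2*r))]
end

section
/- If (a,b) ∈ ℝ² satisfies (a − 2)² + b² < 1 (i.e., lies inside the orthocentroidal circle with O = (0,0), H = (3,0)), then (a² + b²)² > (2a − 3)² + 4b². -/
/-- If `(a,b)` lies inside the orthocentroidal circle `(a − 2)² + b² < 1`,
then `(a² + b²)² > (2a − 3)² + 4b²`. -/
theorem stmt6 (a b : ℝ) (h : (a - 2) ^ 2 + b ^ 2 < 1) :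
    (a ^ 2 + b ^ 2) ^ 2 > (2 * a - 3) ^ 2 + 4 * b ^ 2 := by
  have ha : a > 1 := by nlinarith [sq_nonneg b, sq_nonneg (a - 1)]
  nlinarith [sq_nonneg b, sq_nonneg (a ^ 2 + b ^ 2 - 1), mul_pos (sub_pos.2 ha) (sub_pos.2 ha)]
end

section
/- Every point inside the orthocentroidal disc other than its center-adjacent exceptional point N = (3/2,0) lies on exactly one curve of the family (x² + y²)² = R²((2x − 3)² + 4y²) with R > 1; and N lies on no such curve. -/
/-!
Write `S = x² + y²` and `D = (2x − 3)² + 4y²`. The curve through `(x, y)` has `R² = S² / D`,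
so there is exactly one `R > 1` as soon as `0 < D < S²`. On the disc, `S < 4x − 3` gives
`D = 4S − 12x + 9 < S`, and `x > 1` gives `S > 1`, hence `D < S²`; moreover `D = 0` only at `N`,
where the right-hand side vanishes for every `R` while `S² = (9/4)²`.
-/

lemma existsUnique_one_lt_and_eq_sq_mul {p d : ℝ} (hd : 0 < d) (hdp : d < p) :
    ∃! R : ℝ, 1 < R ∧ p = R ^ 2 * d := by
  have hratio : 1 < p / d := (one_lt_div hd).mpr hdp
  refine ⟨√(p / d), ⟨?_, ?_⟩, ?_⟩
  · exact (Real.lt_sqrt zero_le_one).mpr (by simpa using hratio)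
  · rw [Real.sq_sqrt (by positivity), div_mul_cancel₀ p hd.ne']
  · rintro R ⟨hR, rfl⟩
    rw [mul_div_cancel_right₀ _ hd.ne', Real.sqrt_sq (by positivity)]

lemma two_mul_sub_three_sq_add_four_mul_sq_pos {x y : ℝ} (h : ¬(x = 3/2 ∧ y = 0)) :
    0 < (2 * x - 3) ^ 2 + 4 * y ^ 2 := by
  by_contra! hle
  exact h ⟨by nlinarith [sq_nonneg (2 * x - 3), sq_nonneg y],
    by nlinarith [sq_nonneg (2 * x - 3), sq_nonneg y]⟩

lemma two_mul_sub_three_sq_add_four_mul_sq_lt_of_mem_disc {x y : ℝ}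
    (h : (x - 2) ^ 2 + y ^ 2 < 1) :
    (2 * x - 3) ^ 2 + 4 * y ^ 2 < (x ^ 2 + y ^ 2) ^ 2 := by
  have hx : 1 < x := by nlinarith [sq_nonneg y]
  have hS : 1 < x ^ 2 + y ^ 2 := by nlinarith [sq_nonneg y]
  calc (2 * x - 3) ^ 2 + 4 * y ^ 2 = 4 * (x ^ 2 + y ^ 2) - 12 * x + 9 := by ring
    _ < x ^ 2 + y ^ 2 := by nlinarith
    _ < (x ^ 2 + y ^ 2) ^ 2 := by nlinarith

/-- Every point inside the orthocentroidal disc other than `N = (3/2,0)` lies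
on exactly one curve `(x² + y²)² = R²((2x − 3)² + 4y²)` with `R > 1`, and
`N` lies on no such curve. -/
theorem stmt7 (x y : ℝ) (h : (x - 2) ^ 2 + y ^ 2 < 1) :
    (¬(x = 3/2 ∧ y = 0) →
      ∃! R : ℝ, 1 < R ∧
        (x ^ 2 + y ^ 2) ^ 2 = R ^ 2 * ((2 * x - 3) ^ 2 + 4 * y ^ 2)) ∧
    ((x = 3/2 ∧ y = 0) →
      ∀ R : ℝ, 1 < R →
        (x ^ 2 + y ^ 2) ^ 2 ≠ R ^ 2 * ((2 * x - 3) ^ 2 + 4 * y ^ 2)) := by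
  refine ⟨fun hN => ?_, ?_⟩
  · exact existsUnique_one_lt_and_eq_sq_mul (two_mul_sub_three_sq_add_four_mul_sq_pos hN)
      (two_mul_sub_three_sq_add_four_mul_sq_lt_of_mem_disc h)
  · rintro ⟨rfl, rfl⟩ R -
    norm_num
end

section
/- For any non-equilateral triangle with vertices A = (0,a), B = (−b,0), C = (c,0), a,b,c > 0, the Fermat point T = (u/d, v/d) (with u, v, d as given) satisfies OT > 2·NT, where O = ((c−b)/2, (a²−bc)/(2a)) is the circumcenter and N = ((c−b)/4, (a²+bc)/(4a)) is the nine-point center. Hence T lies strictly inside the orthocentroidal circle. -/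
/-!
For a point `P = (x, y)`, the quantity `OP² - 4·NP²` is the quadratic
`(c - b) x + (a² + 3bc) y / a - 3 (x² + y²) - bc`. Evaluated at the Fermat point it equals
`(b + c) ((a² - 3bc)² + a² (b - c)²) / (a d)`, an identity that only uses `√3 ² = 3`.
This is positive because the sum of squares vanishes only when `b = c` and `a² = 3b²`,
i.e. for the equilateral triangle.
-/

theorem orthocentroidal_power_eq (a b c x y : ℝ) (ha : a ≠ 0) :
    (x - (c - b) / 2) ^ 2 + (y - (a ^ 2 - b * c) / (2 * a)) ^ 2
      - 4 * ((x - (c - b) / 4) ^ 2 + (y - (a ^ 2 + b * c) / (4 * a)) ^ 2)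
      = (c - b) * x + (a ^ 2 + 3 * b * c) / a * y - 3 * (x ^ 2 + y ^ 2) - b * c := by
  field_simp
  ring

section FermatPoint

variable {a b c u v d : ℝ}
  (hu : u = (√3 * b * c - √3 * a ^ 2 - a * c - a * b) * (b - c))
  (hv : v = (a ^ 2 + √3 * a * b + √3 * a * c + 3 * b * c) * (b + c))
  (hd : d = 2 * √3 * (a ^ 2 + b ^ 2 + c ^ 2) + 6 * a * c + 6 * a * b + 2 * √3 * b * c)
include hu hv hd

theorem fermat_orthocentroidal_power_mul_eq :
    a * ((c - b) * u * d - 3 * (u ^ 2 + v ^ 2) - b * c * d ^ 2) + (a ^ 2 + 3 * b * c) * v * d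
      = d * (b + c) * ((a ^ 2 - 3 * b * c) ^ 2 + a ^ 2 * (b - c) ^ 2) := by
  have h3 : √3 ^ 2 = 3 := Real.sq_sqrt (by norm_num)
  subst hu hv hd
  linear_combination a * (b + c) ^ 2 * ((a ^ 2 - 3 * b * c) ^ 2 + a ^ 2 * (b - c) ^ 2) * h3

theorem fermat_orthocentroidal_power_eq (ha : a ≠ 0) (hd₀ : d ≠ 0) :
    (c - b) * (u / d) + (a ^ 2 + 3 * b * c) / a * (v / d) - 3 * ((u / d) ^ 2 + (v / d) ^ 2) - b * c
      = (b + c) * ((a ^ 2 - 3 * b * c) ^ 2 + a ^ 2 * (b - c) ^ 2) / (a * d) := by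
  field_simp
  linear_combination fermat_orthocentroidal_power_mul_eq hu hv hd

end FermatPoint

theorem sq_sub_add_sq_mul_pos {a b c : ℝ} (ha : 0 < a) (hb : 0 < b)
    (hne : ¬(b = c ∧ a = √3 * b)) :
    0 < (a ^ 2 - 3 * b * c) ^ 2 + a ^ 2 * (b - c) ^ 2 := by
  refine lt_of_le_of_ne (by positivity) fun h => hne ?_
  obtain ⟨h₁, h₂⟩ := (add_eq_zero_iff_of_nonneg (sq_nonneg _) (by positivity)).1 h.symm
  obtain rfl : b = c := by simpa [ha.ne', sub_eq_zero] using h₂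
  refine ⟨rfl, ?_⟩
  rw [← Real.sqrt_sq ha.le,
    show a ^ 2 = 3 * b ^ 2 by linear_combination (pow_eq_zero_iff two_ne_zero).1 h₁,
    Real.sqrt_mul' _ (sq_nonneg b), Real.sqrt_sq hb.le]

theorem two_mul_sqrt_lt_sqrt {x y : ℝ} (hy : 0 ≤ y) (h : 4 * y < x) : 2 * √y < √x :=
  (Real.lt_sqrt (by positivity)).2 (by rw [mul_pow, Real.sq_sqrt hy]; linarith)

/-- For a non-equilateral triangle `A = (0,a)`, `B = (−b,0)`, `C = (c,0)` with
`a,b,c > 0`, the Fermat point `T = (u/d, v/d)` satisfies `OT > 2·NT`, where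
`O = ((c−b)/2, (a²−bc)/(2a))` and `N = ((c−b)/4, (a²+bc)/(4a))`; hence `T`
lies strictly inside the orthocentroidal circle. -/
theorem stmt11 (a b c : ℝ) (ha : 0 < a) (hb : 0 < b) (hc : 0 < c)
    (hne : ¬(b = c ∧ a = Real.sqrt 3 * b)) :
    let u := (Real.sqrt 3 * b * c - Real.sqrt 3 * a ^ 2 - a * c - a * b) * (b - c)
    let v := (a ^ 2 + Real.sqrt 3 * a * b + Real.sqrt 3 * a * c + 3 * b * c) * (b + c)
    let d := 2 * Real.sqrt 3 * (a ^ 2 + b ^ 2 + c ^ 2) + 6 * a * c + 6 * a * b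
        + 2 * Real.sqrt 3 * b * c
    Real.sqrt ((u / d - (c - b) / 2) ^ 2 + (v / d - (a ^ 2 - b * c) / (2 * a)) ^ 2)
      > 2 * Real.sqrt ((u / d - (c - b) / 4) ^ 2
          + (v / d - (a ^ 2 + b * c) / (4 * a)) ^ 2) := by
  intro u v d
  have hd : 0 < d := by positivity
  have hpower := orthocentroidal_power_eq a b c (u / d) (v / d) ha.ne'
  rw [fermat_orthocentroidal_power_eq rfl rfl rfl ha.ne' hd.ne'] at hpower
  have hpos : 0 < (b + c) * ((a ^ 2 - 3 * b * c) ^ 2 + a ^ 2 * (b - c) ^ 2) / (a * d) := by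
    have := sq_sub_add_sq_mul_pos ha hb hne
    positivity
  exact two_mul_sqrt_lt_sqrt (by positivity) (by linarith)
end

section
/- Let A = (0,a), B = (−b,0), C = (c,0) with a,b,c > 0, and let P = ((c−b)/2, −(√3/2)(b+c)) and Q = ((√3·a + c)/2, (a + √3·c)/2) be the apexes of equilateral triangles erected externally on BC and AC respectively. Then lines AP and BQ intersect at T = (u/d, v/d) with u = (√3·bc − √3·a² − ac − ab)(b − c), v = (a² + √3·ab + √3·ac + 3bc)(b + c), d = 2√3(a² + b² + c²) + 6ac + 6ab + 2√3·bc. -/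
/-- With `A = (0,a)`, `B = (−b,0)`, `P = ((c−b)/2, −(√3/2)(b+c))`,
`Q = ((√3·a + c)/2, (a + √3·c)/2)`, the point `T = (u/d, v/d)` lies on both
lines `AP` and `BQ` (it is their intersection, the Fermat point). -/
theorem stmt14 (a b c : ℝ) (ha : 0 < a) (hb : 0 < b) (hc : 0 < c) :
    let u := (Real.sqrt 3 * b * c - Real.sqrt 3 * a ^ 2 - a * c - a * b) * (b - c)
    let v := (a ^ 2 + Real.sqrt 3 * a * b + Real.sqrt 3 * a * c + 3 * b * c) * (b + c)
    let d := 2 * Real.sqrt 3 * (a ^ 2 + b ^ 2 + c ^ 2) + 6 * a * c + 6 * a * b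
        + 2 * Real.sqrt 3 * b * c
    let Tx := u / d
    let Ty := v / d
    -- T lies on line AP : A = (0,a), P = ((c−b)/2, −(√3/2)(b+c))
    (Tx - 0) * (-(Real.sqrt 3 / 2) * (b + c) - a) = (Ty - a) * ((c - b) / 2 - 0) ∧
    -- T lies on line BQ : B = (−b,0), Q = ((√3·a + c)/2, (a + √3·c)/2)
    (Tx - (-b)) * ((a + Real.sqrt 3 * c) / 2 - 0)
      = (Ty - 0) * ((Real.sqrt 3 * a + c) / 2 - (-b)) := by
  intro u v d Tx Ty
  have hs : Real.sqrt 3 > 0 := Real.sqrt_pos.mpr (by norm_num)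
  have hs2 : Real.sqrt 3 ^ 2 = 3 := Real.sq_sqrt (by norm_num)
  have hd : d ≠ 0 := by
    have : 0 < d := by positivity
    linarith
  constructor
  · simp only [Tx, Ty, u, v, d]
    field_simp
    linear_combination (b*c^3 - b^3*c + a^2*b^2 - a^2*c^2) * hs2
  · simp only [Tx, Ty, u, v, d]
    field_simp
    linear_combination (3*b^2*c^2 + b*c^3 - a^2*b*c + 2*b^3*c - a^2*b^2) * hs2
end

section
/- For the isosceles triangle A = (0,a), B = (−b,0), C = (b,0) with a, b > 0 and a ≠ √3·b, the Fermat point is T = (0, b/√3), the centroid is G = (0, a/3), the orthocenter is H = (0, b²/a), and T = (1 − t)G + tH with t = a/(a + √3·b). -/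
/-!
For `c = b` the numerator and denominator of the Fermat point both factor through
`(a + √3 b)²`: `v = 2b (a + √3 b)²` and `d = 2√3 (a + √3 b)²`, while `u` carries the factor
`b - b`. Hence `T = (0, b/√3)`. The collinearity `T = (1 - t) G + t H` reduces to
`1 - t = √3 b / (a + √3 b)` together with `√3 b · a/3 + b² = (b/√3)(a + √3 b)`.
-/

open Real

lemma isosceles_fermat_denominator_eq (a b : ℝ) :
    2 * √3 * (a ^ 2 + b ^ 2 + b ^ 2) + 6 * a * b + 6 * a * b + 2 * √3 * b * b
      = 2 * √3 * (a + √3 * b) ^ 2 := by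
  linear_combination (-(2 * √3 * b ^ 2 + 4 * a * b)) * sq_sqrt (show (0 : ℝ) ≤ 3 by norm_num)

lemma isosceles_fermat_numerator_eq (a b : ℝ) :
    (a ^ 2 + √3 * a * b + √3 * a * b + 3 * b * b) * (b + b) = 2 * b * (a + √3 * b) ^ 2 := by
  linear_combination (-2 * b ^ 3) * sq_sqrt (show (0 : ℝ) ≤ 3 by norm_num)

lemma isosceles_fermat_y_eq {a b : ℝ} (hab : a + √3 * b ≠ 0) :
    (a ^ 2 + √3 * a * b + √3 * a * b + 3 * b * b) * (b + b)
        / (2 * √3 * (a ^ 2 + b ^ 2 + b ^ 2) + 6 * a * b + 6 * a * b + 2 * √3 * b * b)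
      = b / √3 := by
  have hs : √3 ≠ 0 := by positivity
  rw [isosceles_fermat_numerator_eq, isosceles_fermat_denominator_eq,
    div_eq_div_iff (by positivity) hs]
  ring

lemma isosceles_fermat_y_eq_lineMap {a b : ℝ} (ha : a ≠ 0) (hab : a + √3 * b ≠ 0) :
    b / √3 = (1 - a / (a + √3 * b)) * (a / 3) + a / (a + √3 * b) * (b ^ 2 / a) := by
  rw [one_sub_div hab, add_sub_cancel_left]
  rw [mul_comm √3 b] at hab ⊢
  field_simp
  linear_combination (-a * b) * sq_sqrt (show (0 : ℝ) ≤ 3 by norm_num)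

theorem stmt16_general (a b : ℝ) (ha : 0 < a) (hb : 0 < b) :
    let u := (Real.sqrt 3 * b * b - Real.sqrt 3 * a ^ 2 - a * b - a * b) * (b - b)
    let v := (a ^ 2 + Real.sqrt 3 * a * b + Real.sqrt 3 * a * b + 3 * b * b) * (b + b)
    let d := 2 * Real.sqrt 3 * (a ^ 2 + b ^ 2 + b ^ 2) + 6 * a * b + 6 * a * b
        + 2 * Real.sqrt 3 * b * b
    let t := a / (a + Real.sqrt 3 * b)
    -- Fermat point T = (u/d, v/d) = (0, b/√3)
    u / d = 0 ∧ v / d = b / Real.sqrt 3 ∧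
    -- centroid G = ((0 + (−b) + b)/3, (a + 0 + 0)/3) = (0, a/3)
    (0 + -b + b) / 3 = 0 ∧ (a + 0 + 0) / 3 = a / 3 ∧
    -- H = (0, b²/a) is on the altitude from B (perpendicular to AC through B)
    ((0 - -b) * (b - 0) + (b ^ 2 / a - 0) * (0 - a) = 0) ∧
    -- and on the altitude from C (perpendicular to AB through C)
    ((0 - b) * (-b - 0) + (b ^ 2 / a - 0) * (0 - a) = 0) ∧
    -- T = (1 − t)·G + t·H
    (0 : ℝ) = (1 - t) * 0 + t * 0 ∧
    b / Real.sqrt 3 = (1 - t) * (a / 3) + t * (b ^ 2 / a) := by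
  intro u v d t
  have hab : a + √3 * b ≠ 0 := by positivity
  refine ⟨by simp [u], isosceles_fermat_y_eq hab, by ring, by ring, ?_, ?_, by ring,
    isosceles_fermat_y_eq_lineMap ha.ne' hab⟩
  all_goals field_simp; ring

/-- For the isosceles triangle `A = (0,a)`, `B = (−b,0)`, `C = (b,0)` with
`a, b > 0` and `a ≠ √3·b`: the Fermat point is `T = (0, b/√3)`, the centroid
is `G = (0, a/3)`, `H = (0, b²/a)` is the orthocenter (lies on both altitudes
from `B` and `C`), and `T = (1 − t)G + tH` with `t = a/(a + √3·b)`. -/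
theorem stmt16 (a b : ℝ) (ha : 0 < a) (hb : 0 < b) (hne : a ≠ Real.sqrt 3 * b) :
    let u := (Real.sqrt 3 * b * b - Real.sqrt 3 * a ^ 2 - a * b - a * b) * (b - b)
    let v := (a ^ 2 + Real.sqrt 3 * a * b + Real.sqrt 3 * a * b + 3 * b * b) * (b + b)
    let d := 2 * Real.sqrt 3 * (a ^ 2 + b ^ 2 + b ^ 2) + 6 * a * b + 6 * a * b
        + 2 * Real.sqrt 3 * b * b
    let t := a / (a + Real.sqrt 3 * b)
    -- Fermat point T = (u/d, v/d) = (0, b/√3)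
    u / d = 0 ∧ v / d = b / Real.sqrt 3 ∧
    -- centroid G = ((0 + (−b) + b)/3, (a + 0 + 0)/3) = (0, a/3)
    (0 + -b + b) / 3 = 0 ∧ (a + 0 + 0) / 3 = a / 3 ∧
    -- H = (0, b²/a) is on the altitude from B (perpendicular to AC through B)
    ((0 - -b) * (b - 0) + (b ^ 2 / a - 0) * (0 - a) = 0) ∧
    -- and on the altitude from C (perpendicular to AB through C)
    ((0 - b) * (-b - 0) + (b ^ 2 / a - 0) * (0 - a) = 0) ∧
    -- T = (1 − t)·G + t·H
    (0 : ℝ) = (1 - t) * 0 + t * 0 ∧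
    b / Real.sqrt 3 = (1 - t) * (a / 3) + t * (b ^ 2 / a) :=
  stmt16_general a b ha hb
end
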